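/- arXiv:2309.12025 — 3 statements merged into one kernel-verified Lean document; each statement's English description precedes it below -/
import Mathlib

section
/- Let f be a nonnegative k-submodular function with f(0) = 0, let (e_1,i_1),…,(e_t,i_t) be an LAA run, and let o be any k-set. Then for every j with 0 ≤ j ≤ t, f(o) − f(o^j) ≤ 2·f(x^j). -/
/-!
Induct on `j`. Since `e_j ∉ supp x^j`, both `x^{j+1}` and `o^{j+1}` arise from `x^j` and `o^j` by
setting the position of `e_j` to `i_j`, so it suffices to bound the loss `f(o^j) − f(o^{j+1})` by
twice the greedy gain `f(x^{j+1}) − f(x^j)`; the gains then telescope to `f(x^j)` as `f(0) = 0`.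
For the one-step bound, delete `e_j` from `o^j` to get `z ⊒ x^j`. Orthant submodularity bounds
every gain at `z` by the corresponding gain at `x^j`, hence by the greedy one, and pairwise
monotonicity (the gains of two different positions of `e_j` sum to a nonnegative number)
turns the loss into such gains in each of the cases `o^j(e_j) = 0`, `= i_j`, or another position.
-/

/-- The meet `x ⊓ y` of two `k`-sets, with components `Xᵢ ∩ Yᵢ`. -/
def sqcap {V : Type*} (x y : V → ℕ) : V → ℕ :=
  fun e => if x e = y e then x e else 0

/-- The join `x ⊔ y` of two `k`-sets, with components
`Zᵢ = (Xᵢ ∪ Yᵢ) \ ⋃_{j ≠ i} (Xⱼ ∪ Yⱼ)`. -/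
def sqcup {V : Type*} (x y : V → ℕ) : V → ℕ :=
  fun e =>
    if x e = 0 then y e
    else if y e = 0 then x e
    else if x e = y e then x e else 0

/-- A `k`-set: every element gets a position in `{0, 1, …, k}`
(`0` meaning unselected). -/
def IsKSet {V : Type*} (k : ℕ) (x : V → ℕ) : Prop := ∀ e, x e ≤ k

/-- `x ⊑ y`: every component of `x` is contained in the corresponding
component of `y`. -/
def KLE {V : Type*} (x y : V → ℕ) : Prop := ∀ e, x e ≠ 0 → y e = x e

/-- The singleton `k`-set `(e, i)`. -/
def singl {V : Type*} [DecidableEq V] (e : V) (i : ℕ) : V → ℕ :=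
  fun e' => if e' = e then i else 0

/-- `k`-submodularity: `f x + f y ≥ f (x ⊓ y) + f (x ⊔ y)` for all `k`-sets. -/
def KSubmodular {V : Type*} (k : ℕ) (f : (V → ℕ) → ℝ) : Prop :=
  ∀ x y : V → ℕ, IsKSet k x → IsKSet k y →
    f x + f y ≥ f (sqcap x y) + f (sqcup x y)

/-- The marginal gain `Δ_{(e,i)} f(x) = f (x ⊔ (e,i)) - f x`. -/
def marg {V : Type*} [DecidableEq V] (f : (V → ℕ) → ℝ) (e : V) (i : ℕ)
    (x : V → ℕ) : ℝ :=
  f (sqcup x (singl e i)) - f x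

/-- The cost of a `k`-set: the total cost of its support. -/
noncomputable def cost {V : Type*} [Fintype V] (c : V → ℝ) (x : V → ℕ) : ℝ :=
  ∑ e ∈ Finset.univ.filter (fun e => x e ≠ 0), c e

open Function

def overwrite {V : Type*} (o z : V → ℕ) : V → ℕ :=
  fun v => if z v = 0 then o v else z v

section KSet

variable {V : Type*} {k : ℕ}

lemma sqcup_sqcup_self_right (o z : V → ℕ) : sqcup (sqcup o z) z = overwrite o z := by
  funext v
  simp only [sqcup, overwrite]
  split_ifs <;> omega

lemma overwrite_zero (o : V → ℕ) : overwrite o (fun _ => 0) = o := by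
  funext v
  simp [overwrite]

lemma kle_overwrite (o z : V → ℕ) : KLE z (overwrite o z) := by
  intro v hv
  simp [overwrite, hv]

lemma IsKSet.overwrite {o z : V → ℕ} (ho : IsKSet k o) (hz : IsKSet k z) :
    IsKSet k (overwrite o z) := by
  intro v
  unfold _root_.overwrite
  split_ifs
  exacts [ho v, hz v]

lemma IsKSet.update [DecidableEq V] {x : V → ℕ} (hx : IsKSet k x) (a : V) {i : ℕ} (hi : i ≤ k) :
    IsKSet k (update x a i) := by
  intro v
  by_cases hv : v = a
  · subst hv; simpa using hi
  · simpa [hv] using hx v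

lemma overwrite_update [DecidableEq V] (o z : V → ℕ) (a : V) {p : ℕ} (hp : p ≠ 0) :
    overwrite o (update z a p) = update (overwrite o z) a p := by
  funext v
  by_cases hv : v = a
  · subst hv; simp [_root_.overwrite, hp]
  · simp [_root_.overwrite, hv]

lemma sqcup_singl_of_eq_zero [DecidableEq V] {x : V → ℕ} {a : V} (ha : x a = 0) (i : ℕ) :
    sqcup x (singl a i) = update x a i := by
  funext v
  by_cases hv : v = a
  · subst hv; simp [sqcup, singl, ha]
  · simp only [sqcup, singl, hv, update_of_ne hv, if_false]
    split_ifs <;> omega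

end KSet

section Submodular

variable {V : Type*} [DecidableEq V] {k : ℕ} {f : (V → ℕ) → ℝ}

lemma KSubmodular.two_mul_le_add_update (hsub : KSubmodular k f) {x : V → ℕ} (hx : IsKSet k x)
    {a : V} (ha : x a = 0) {i l : ℕ} (hi : 1 ≤ i) (hik : i ≤ k) (hl : 1 ≤ l) (hlk : l ≤ k)
    (hil : i ≠ l) : 2 * f x ≤ f (update x a i) + f (update x a l) := by
  have key := hsub _ _ (hx.update a hik) (hx.update a hlk)
  have hcap : sqcap (update x a i) (update x a l) = x := by
    funext v
    by_cases hv : v = a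
    · subst hv; simp [sqcap, ha, hil]
    · simp [sqcap, hv]
  have hcup : sqcup (update x a i) (update x a l) = x := by
    funext v
    by_cases hv : v = a
    · subst hv; simp only [sqcup, update_self, ha]; split_ifs <;> omega
    · simp [sqcup, hv]
  rw [hcap, hcup] at key
  linarith

lemma KSubmodular.update_sub_le_update_sub (hsub : KSubmodular k f) {x y : V → ℕ}
    (hx : IsKSet k x) (hy : IsKSet k y) (hxy : KLE x y) {a : V} (hay : y a = 0) {i : ℕ}
    (hik : i ≤ k) : f (update y a i) - f y ≤ f (update x a i) - f x := by
  have hxa : x a = 0 := by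
    by_contra h
    exact h (hxy a h ▸ hay)
  have key := hsub _ _ (hx.update a hik) hy
  have hcap : sqcap (update x a i) y = x := by
    funext v
    by_cases hv : v = a
    · subst hv; simp [sqcap, hxa, hay]
    · by_cases hxv : x v = 0
      · simp [sqcap, hv, hxv]
      · simp [sqcap, hv, hxy v hxv]
  have hcup : sqcup (update x a i) y = update y a i := by
    funext v
    by_cases hv : v = a
    · subst hv; simp only [sqcup, update_self, hay]; split_ifs <;> omega
    · by_cases hxv : x v = 0
      · simp [sqcup, hv, hxv]
      · simp [sqcup, hv, hxy v hxv]
  rw [hcap, hcup] at key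
  linarith

lemma KSubmodular.sub_update_le_two_mul (hsub : KSubmodular k f) (hk : 2 ≤ k) {x w : V → ℕ}
    (hx : IsKSet k x) (hw : IsKSet k w) (hxw : KLE x w) {a : V} (ha : x a = 0) {p : ℕ}
    (hp : 1 ≤ p) (hpk : p ≤ k)
    (hbest : ∀ l, 1 ≤ l → l ≤ k → f (update x a l) ≤ f (update x a p)) :
    f w - f (update w a p) ≤ 2 * (f (update x a p) - f x) := by
  set z := update w a 0 with hz
  have hza : z a = 0 := update_self a 0 w
  have hzk : IsKSet k z := hw.update a (Nat.zero_le k)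
  have hxz : KLE x z := fun v hv => by
    rw [hz, update_of_ne (by rintro rfl; exact hv ha)]
    exact hxw v hv
  have hgain_le {l : ℕ} (hl : 1 ≤ l) (hlk : l ≤ k) :
      f (update z a l) - f z ≤ f (update x a p) - f x :=
    (hsub.update_sub_le_update_sub hx hzk hxz hza hlk).trans (by linarith [hbest l hl hlk])
  -- The greedy gain is nonnegative since it dominates the gain of a second position `q`.
  obtain ⟨q, hq, hqk, hqp⟩ : ∃ q, 1 ≤ q ∧ q ≤ k ∧ q ≠ p :=
    ⟨if p = 1 then 2 else 1, by split_ifs <;> omega, by split_ifs <;> omega,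
      by split_ifs <;> omega⟩
  have hgain_nonneg : 0 ≤ f (update x a p) - f x := by
    linarith [hsub.two_mul_le_add_update hx ha hp hpk hq hqk hqp.symm, hbest q hq hqk]
  by_cases hwa0 : w a = 0
  · have hwz : w = z := by rw [hz, ← hwa0, update_eq_self]
    rw [← hwz] at hgain_le
    linarith [hsub.two_mul_le_add_update hw hwa0 hp hpk hq hqk hqp.symm, hgain_le hq hqk]
  by_cases hwap : w a = p
  · have hww : update w a p = w := by rw [← hwap, update_eq_self]
    rw [hww]
    linarith
  have hwz : w = update z a (w a) := by rw [hz, update_idem, update_eq_self]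
  have hwpz : update w a p = update z a p := by rw [hz, update_idem]
  rw [hwpz, hwz]
  linarith [hsub.two_mul_le_add_update hzk hza hp hpk (Nat.one_le_iff_ne_zero.2 hwa0) (hw a)
    (Ne.symm hwap), hgain_le (Nat.one_le_iff_ne_zero.2 hwa0) (hw a)]

end Submodular

section Run

variable {V : Type*} [DecidableEq V] {t : ℕ} {e : ℕ → V} {pos : ℕ → ℕ} {x : ℕ → V → ℕ}

lemma run_apply_eq_zero (hx0 : x 0 = fun _ => 0)
    (hxsucc : ∀ j < t, x (j + 1) = sqcup (x j) (singl (e j) (pos j)))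
    (hdist : ∀ j₁ j₂, j₁ < t → j₂ < t → e j₁ = e j₂ → j₁ = j₂) :
    ∀ j m, j ≤ m → m < t → x j (e m) = 0
  | 0, _, _, _ => by rw [hx0]
  | j + 1, m, hjm, hm => by
    have hne : e m ≠ e j := fun h => by have := hdist m j hm (by omega) h; omega
    rw [hxsucc j (by omega)]
    simp [sqcup, singl, run_apply_eq_zero hx0 hxsucc hdist j m (by omega) hm, hne]

lemma run_succ_eq_update (hx0 : x 0 = fun _ => 0)
    (hxsucc : ∀ j < t, x (j + 1) = sqcup (x j) (singl (e j) (pos j)))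
    (hdist : ∀ j₁ j₂, j₁ < t → j₂ < t → e j₁ = e j₂ → j₁ = j₂) {j : ℕ} (hj : j < t) :
    x (j + 1) = update (x j) (e j) (pos j) := by
  rw [hxsucc j hj, sqcup_singl_of_eq_zero (run_apply_eq_zero hx0 hxsucc hdist j j le_rfl hj)]

lemma run_isKSet {k : ℕ} (hx0 : x 0 = fun _ => 0)
    (hxsucc : ∀ j < t, x (j + 1) = sqcup (x j) (singl (e j) (pos j)))
    (hdist : ∀ j₁ j₂, j₁ < t → j₂ < t → e j₁ = e j₂ → j₁ = j₂) (hposk : ∀ j < t, pos j ≤ k) :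
    ∀ j ≤ t, IsKSet k (x j)
  | 0, _ => by simp [hx0, IsKSet]
  | j + 1, hj => by
    rw [run_succ_eq_update hx0 hxsucc hdist hj]
    exact (run_isKSet hx0 hxsucc hdist hposk j (by omega)).update _ (hposk j hj)

end Run

theorem stmt0_general {V : Type*} [DecidableEq V]
    (k : ℕ) (hk : 2 ≤ k)
    (f : (V → ℕ) → ℝ)
    (hsub : KSubmodular k f)
    (hf0 : f (fun _ => 0) = 0)
    (t : ℕ) (e : ℕ → V) (pos : ℕ → ℕ)
    (hdist : ∀ j₁ j₂, j₁ < t → j₂ < t → e j₁ = e j₂ → j₁ = j₂)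
    (hposk : ∀ j < t, 1 ≤ pos j ∧ pos j ≤ k)
    (x : ℕ → (V → ℕ))
    (hx0 : x 0 = fun _ => 0)
    (hxsucc : ∀ j < t, x (j + 1) = sqcup (x j) (singl (e j) (pos j)))
    (hbest : ∀ j < t, ∀ l, 1 ≤ l → l ≤ k →
      f (sqcup (x j) (singl (e j) l)) ≤ f (sqcup (x j) (singl (e j) (pos j))))
    (o : V → ℕ) (ho : IsKSet k o) :
    ∀ j ≤ t, f o - f (sqcup (sqcup o (x j)) (x j)) ≤ 2 * f (x j) := by
  have hxk := run_isKSet hx0 hxsucc hdist fun j hj => (hposk j hj).2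
  intro j
  simp only [sqcup_sqcup_self_right]
  induction j with
  | zero => simp [hx0, overwrite_zero, hf0]
  | succ j ih =>
    intro (hj : j < t)
    have hxe := run_apply_eq_zero hx0 hxsucc hdist j j le_rfl hj
    have hstep := hsub.sub_update_le_two_mul hk (hxk j hj.le) (ho.overwrite (hxk j hj.le))
      (kle_overwrite o (x j)) hxe (hposk j hj).1 (hposk j hj).2 fun l hl hlk => by
        simpa only [sqcup_singl_of_eq_zero hxe] using hbest j hj l hl hlk
    rw [run_succ_eq_update hx0 hxsucc hdist hj,
      overwrite_update o (x j) (e j) (Nat.one_le_iff_ne_zero.1 (hposk j hj).1)]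
    linarith [ih hj.le]

/-- along an LAA run, for every `0 ≤ j ≤ t` and every `k`-set `o`,
`f(o) − f(o^j) ≤ 2 f(x^j)`, where `o^j = (o ⊔ x^j) ⊔ x^j`. -/
theorem stmt0 {V : Type*} [Fintype V] [DecidableEq V]
    (k : ℕ) (hk : 2 ≤ k)
    (f : (V → ℕ) → ℝ)
    (hsub : KSubmodular k f)
    (hnn : ∀ x : V → ℕ, IsKSet k x → 0 ≤ f x)
    (hf0 : f (fun _ => 0) = 0)
    (c : V → ℝ) (hc : ∀ e, 0 < c e) (B : ℝ) (hB : 0 < B)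
    (t : ℕ) (e : ℕ → V) (pos : ℕ → ℕ)
    (hdist : ∀ j₁ j₂, j₁ < t → j₂ < t → e j₁ = e j₂ → j₁ = j₂)
    (hposk : ∀ j < t, 1 ≤ pos j ∧ pos j ≤ k)
    (x : ℕ → (V → ℕ))
    (hx0 : x 0 = fun _ => 0)
    (hxsucc : ∀ j < t, x (j + 1) = sqcup (x j) (singl (e j) (pos j)))
    (hbest : ∀ j < t, ∀ l, 1 ≤ l → l ≤ k →
      f (sqcup (x j) (singl (e j) l)) ≤ f (sqcup (x j) (singl (e j) (pos j))))
    (hgain : ∀ j < t, c (e j) * f (x j) / B ≤ marg f (e j) (pos j) (x j))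
    (hlight : ∀ j < t, c (e j) ≤ B / 2)
    (o : V → ℕ) (ho : IsKSet k o) :
    ∀ j ≤ t, f o - f (sqcup (sqcup o (x j)) (x j)) ≤ 2 * f (x j) :=
  stmt0_general k hk f hsub hf0 t e pos hdist hposk x hx0 hxsucc hbest o ho
end

section
/- Let f be a nonnegative k-submodular function with f(0) = 0 and let (e_1,i_1),…,(e_t,i_t) be an LAA run with c(x^t) > B. Let T ∈ {0,…,t} be such that c(x_T) ≤ B and c(x_T) ≥ c(x_j) for every j ∈ {0,…,t} with c(x_j) ≤ B, and set x' = x_T. Then f(x') ≥ f(x^t)/3. -/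
open Finset

section PairSets

variable {V ι : Type*}

/-- `y` is the `k`-set `{(e i, pos i) | i ∈ S}`. -/
def IsPairSet (e : ι → V) (pos : ι → ℕ) (S : Finset ι) (y : V → ℕ) : Prop :=
  (∀ i ∈ S, y (e i) = pos i) ∧ ∀ v, (∀ i ∈ S, e i ≠ v) → y v = 0

variable {e : ι → V} {pos : ι → ℕ} {S U : Finset ι} {y z : V → ℕ}

theorem isPairSet_empty : IsPairSet e pos ∅ (fun _ => 0) :=
  ⟨by simp, fun _ _ => rfl⟩

theorem isPairSet_singl [DecidableEq V] (i : ι) : IsPairSet e pos {i} (singl (e i) (pos i)) := by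
  refine ⟨by simp [singl], fun v hv => ?_⟩
  simp only [singl, if_neg (hv i (mem_singleton_self i)).symm]

namespace IsPairSet

theorem eq_zero_or_exists (hy : IsPairSet e pos S y) (v : V) :
    y v = 0 ∨ ∃ i ∈ S, e i = v ∧ y v = pos i := by
  by_cases h : ∃ i ∈ S, e i = v
  · obtain ⟨i, hi, rfl⟩ := h
    exact Or.inr ⟨i, hi, rfl, hy.1 i hi⟩
  · exact Or.inl (hy.2 v fun i hi hiv => h ⟨i, hi, hiv⟩)

theorem unique (hy : IsPairSet e pos S y) (hz : IsPairSet e pos S z) : y = z := by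
  funext v
  by_cases h : ∃ i ∈ S, e i = v
  · obtain ⟨i, hi, rfl⟩ := h
    rw [hy.1 i hi, hz.1 i hi]
  · have h : ∀ i ∈ S, e i ≠ v := fun i hi hiv => h ⟨i, hi, hiv⟩
    rw [hy.2 v h, hz.2 v h]

theorem isKSet {k : ℕ} (hy : IsPairSet e pos S y) (hk : ∀ i ∈ S, pos i ≤ k) :
    IsKSet k y := by
  intro v
  rcases hy.eq_zero_or_exists v with h | ⟨i, hi, -, h⟩
  · simp [h]
  · simp [h, hk i hi]

theorem sqcap_eq_zero (hy : IsPairSet e pos S y) (hz : IsPairSet e pos U z)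
    (hdisj : ∀ i ∈ S, ∀ j ∈ U, e i ≠ e j) : sqcap y z = fun _ => 0 := by
  funext v
  rcases hy.eq_zero_or_exists v with h | ⟨i, hi, rfl, -⟩
  · simp [sqcap, h]
  · have : z (e i) = 0 := hz.2 _ fun j hj => (hdisj i hi j hj).symm
    simp only [sqcap, this]
    split_ifs with h <;> simp [h]

theorem sqcup [DecidableEq ι] (hy : IsPairSet e pos S y) (hz : IsPairSet e pos U z)
    (hdisj : ∀ i ∈ S, ∀ j ∈ U, e i ≠ e j) : IsPairSet e pos (S ∪ U) (sqcup y z) := by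
  refine ⟨fun i hi => ?_, fun v hv => ?_⟩
  · rcases mem_union.1 hi with hi | hi
    · have : z (e i) = 0 := hz.2 _ fun j hj => (hdisj i hi j hj).symm
      by_cases h : pos i = 0 <;> simp [_root_.sqcup, this, hy.1 i hi, h]
    · have : y (e i) = 0 := hy.2 _ fun j hj => hdisj j hj i hi
      simp [_root_.sqcup, this, hz.1 i hi]
  · have hyv : y v = 0 := hy.2 v fun i hi => hv i (mem_union_left U hi)
    have hzv : z v = 0 := hz.2 v fun i hi => hv i (mem_union_right S hi)
    simp [_root_.sqcup, hyv, hzv]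

theorem cost_eq [Fintype V] [DecidableEq V] (c : V → ℝ) (hy : IsPairSet e pos S y)
    (hinj : Set.InjOn e S) (hpos : ∀ i ∈ S, pos i ≠ 0) :
    cost c y = ∑ i ∈ S, c (e i) := by
  have hsupp : univ.filter (fun v => y v ≠ 0) = S.image e := by
    ext v
    simp only [mem_filter, mem_univ, true_and, mem_image]
    constructor
    · intro hv
      by_contra h
      exact hv (hy.2 v fun i hi hiv => h ⟨i, hi, hiv⟩)
    · rintro ⟨i, hi, rfl⟩
      rw [hy.1 i hi]
      exact hpos i hi
  rw [cost, hsupp, sum_image hinj]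

end IsPairSet

theorem isPairSet_of_succ [DecidableEq V] [DecidableEq ι] {n : ℕ} {y : ℕ → V → ℕ}
    {σ : ℕ → ι} {S : ℕ → Finset ι} (hy0 : y 0 = fun _ => 0) (hS0 : S 0 = ∅)
    (hy : ∀ j < n, y (j + 1) = _root_.sqcup (y j) (singl (e (σ j)) (pos (σ j))))
    (hS : ∀ j < n, S (j + 1) = insert (σ j) (S j))
    (hfresh : ∀ j < n, ∀ i ∈ S j, e i ≠ e (σ j)) :
    ∀ j ≤ n, IsPairSet e pos (S j) (y j) := by
  intro j hj
  induction j with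
  | zero => rw [hy0, hS0]; exact isPairSet_empty
  | succ j ih =>
    rw [hy j hj, hS j hj, ← union_singleton]
    refine (ih (by omega)).sqcup (isPairSet_singl (σ j)) fun i hi l hl => ?_
    rw [mem_singleton.1 hl]
    exact hfresh j hj i hi

theorem KSubmodular.le_add_of_isPairSet [DecidableEq ι] {k : ℕ} {f : (V → ℕ) → ℝ}
    {w : V → ℕ} (hf : KSubmodular k f) (hf0 : f (fun _ => 0) = 0)
    (hy : IsPairSet e pos S y) (hz : IsPairSet e pos U z) (hw : IsPairSet e pos (S ∪ U) w)
    (hdisj : ∀ i ∈ S, ∀ j ∈ U, e i ≠ e j) (hk : ∀ i ∈ S ∪ U, pos i ≤ k) :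
    f w ≤ f y + f z := by
  have := hf y z (hy.isKSet fun i hi => hk i (mem_union_left U hi))
    (hz.isKSet fun i hi => hk i (mem_union_right S hi))
  rw [hy.sqcap_eq_zero hz hdisj, (hy.sqcup hz hdisj).unique hw, hf0] at this
  linarith

end PairSets

section Run

variable {V : Type*} [DecidableEq V] {t : ℕ} {e : ℕ → V} {pos : ℕ → ℕ}

theorem isPairSet_prefix (hinj : Set.InjOn e (range t)) {x : ℕ → V → ℕ}
    (hx0 : x 0 = fun _ => 0) (hx : ∀ j < t, x (j + 1) = sqcup (x j) (singl (e j) (pos j))) :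
    ∀ j ≤ t, IsPairSet e pos (range j) (x j) :=
  isPairSet_of_succ hx0 range_zero hx (fun j _ => range_add_one) fun j hj i hi h =>
    (mem_range.1 hi).ne (hinj (by simp at hi ⊢; omega) (by simpa using hj) h)

theorem Ico_sub_add_one_eq_insert {j : ℕ} (hj : j < t) :
    Ico (t - (j + 1)) t = insert (t - 1 - j) (Ico (t - j) t) := by
  ext i
  simp only [mem_Ico, mem_insert]
  omega

theorem isPairSet_suffix (hinj : Set.InjOn e (range t)) {xs : ℕ → V → ℕ}
    (hxs0 : xs 0 = fun _ => 0)
    (hxs : ∀ j < t, xs (j + 1) = sqcup (xs j) (singl (e (t - 1 - j)) (pos (t - 1 - j)))) :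
    ∀ j ≤ t, IsPairSet e pos (Ico (t - j) t) (xs j) :=
  isPairSet_of_succ hxs0 (by simp) hxs (fun _ hj => Ico_sub_add_one_eq_insert hj)
    fun j hj i hi h => by
      simp only [mem_Ico] at hi
      have := hinj (by simp; omega) (by simp; omega) h
      omega

end Run

section Greedy

variable {F w : ℕ → ℝ} {B : ℝ} {m n : ℕ}

theorem mul_add_sum_le_of_gain (hB : 0 < B) (hw : ∀ i, 0 ≤ w i) (hFm : 0 ≤ F m)
    (hmn : m ≤ n) (hgain : ∀ j, m ≤ j → j < n → w j * F j / B ≤ F (j + 1) - F j) :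
    F m * (B + ∑ i ∈ Ico m n, w i) ≤ F n * B := by
  induction n, hmn using Nat.le_induction with
  | base => simp
  | succ n hmn ih =>
    have ih := ih fun j hmj hjn => hgain j hmj (by omega)
    have hsum : 0 ≤ ∑ i ∈ Ico m n, w i := sum_nonneg fun i _ => hw i
    have hmono : F m ≤ F n := le_of_mul_le_mul_right (by nlinarith) hB
    have hstep : w n * F n ≤ (F (n + 1) - F n) * B :=
      (div_le_iff₀ hB).1 (hgain n hmn (by omega))
    rw [sum_Ico_succ_top hmn]
    nlinarith [mul_le_mul_of_nonneg_left hmono (hw n)]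

theorem nonneg_of_gain (hB : 0 < B) (hw : ∀ i, 0 ≤ w i) (hF0 : 0 ≤ F 0)
    (hgain : ∀ j < n, w j * F j / B ≤ F (j + 1) - F j) : 0 ≤ F n := by
  have := mul_add_sum_le_of_gain hB hw hF0 n.zero_le fun j _ hj => hgain j hj
  have hsum : 0 ≤ ∑ i ∈ Ico 0 n, w i := sum_nonneg fun i _ => hw i
  nlinarith

end Greedy

theorem half_lt_of_maximal_le_budget {C w : ℕ → ℝ} {B : ℝ} {t T : ℕ}
    (hC : ∀ j < t, C (j + 1) = C j + w j) (hw : ∀ j < t, 0 < w j ∧ w j ≤ B / 2)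
    (hover : B < C t) (hTt : T ≤ t) (hTB : C T ≤ B)
    (hTmax : ∀ j ≤ t, C j ≤ B → C j ≤ C T) :
    B / 2 < C T := by
  have hTt : T < t := lt_of_le_of_ne hTt fun h => by subst h; linarith
  have hnext : B < C (T + 1) := by
    by_contra! h
    linarith [hTmax (T + 1) hTt h, hC T hTt, (hw T hTt).1]
  linarith [hC T hTt, (hw T hTt).2]

theorem stmt1_general {V : Type*} [Fintype V] [DecidableEq V]
    (k : ℕ)
    (f : (V → ℕ) → ℝ)
    (hsub : KSubmodular k f)
    (hf0 : f (fun _ => 0) = 0)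
    (c : V → ℝ) (hc : ∀ e, 0 < c e) (B : ℝ) (hB : 0 < B)
    (t : ℕ) (e : ℕ → V) (pos : ℕ → ℕ)
    (hdist : ∀ j₁ j₂, j₁ < t → j₂ < t → e j₁ = e j₂ → j₁ = j₂)
    (hposk : ∀ j < t, 1 ≤ pos j ∧ pos j ≤ k)
    (x : ℕ → (V → ℕ))
    (hx0 : x 0 = fun _ => 0)
    (hxsucc : ∀ j < t, x (j + 1) = sqcup (x j) (singl (e j) (pos j)))
    (hgain : ∀ j < t, c (e j) * f (x j) / B ≤ marg f (e j) (pos j) (x j))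
    (hlight : ∀ j < t, c (e j) ≤ B / 2)
    (hover : B < cost c (x t))
    (xs : ℕ → (V → ℕ))
    (hxs0 : xs 0 = fun _ => 0)
    (hxssucc : ∀ j < t, xs (j + 1) = sqcup (xs j) (singl (e (t - 1 - j)) (pos (t - 1 - j))))
    (T : ℕ) (hTt : T ≤ t) (hTB : cost c (xs T) ≤ B)
    (hTmax : ∀ j ≤ t, cost c (xs j) ≤ B → cost c (xs j) ≤ cost c (xs T))
    : f (x t) / 3 ≤ f (xs T) := by
  have hinj : Set.InjOn e (range t) := fun a ha b hb =>
    hdist a b (by simpa using ha) (by simpa using hb)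
  have hprefix := isPairSet_prefix hinj hx0 hxsucc
  have hsuffix := isPairSet_suffix hinj hxs0 hxssucc
  have hcost (j : ℕ) (hj : j ≤ t) : cost c (xs j) = ∑ i ∈ Ico (t - j) t, c (e i) :=
    (hsuffix j hj).cost_eq c (hinj.mono fun i hi => by simp at hi ⊢; omega)
      fun i hi => by have := (hposk i (by simp at hi; omega)).1; omega
  have hhalf : B / 2 < cost c (xs T) := by
    have hxt : x t = xs t := (hprefix t le_rfl).unique (by simpa using hsuffix t le_rfl)
    refine half_lt_of_maximal_le_budget (C := fun j => cost c (xs j)) (t := t)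
      (w := fun j => c (e (t - 1 - j))) (fun j hj => ?_)
      (fun j hj => ⟨hc _, hlight _ (by omega)⟩) (hxt ▸ hover) hTt hTB hTmax
    rw [hcost j hj.le, hcost (j + 1) hj, Ico_sub_add_one_eq_insert hj,
      sum_insert (by simp; omega), add_comm]
  have hstep (j : ℕ) (hj : j < t) : c (e j) * f (x j) / B ≤ f (x (j + 1)) - f (x j) :=
    (hgain j hj).trans_eq (by rw [marg, hxsucc j hj])
  set m := t - T
  have hFm : 0 ≤ f (x m) :=
    nonneg_of_gain hB (fun i => (hc (e i)).le) (by rw [hx0, hf0]) fun j hj => hstep j (by omega)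
  have hgrowth : f (x m) * (B + cost c (xs T)) ≤ f (x t) * B := by
    rw [hcost T hTt]
    exact mul_add_sum_le_of_gain hB (fun i => (hc (e i)).le) hFm (by omega) fun j _ hj => hstep j hj
  have hsplit : f (x t) ≤ f (x m) + f (xs T) := by
    have hunion : range m ∪ Ico m t = range t := by
      rw [range_eq_Ico, range_eq_Ico, Ico_union_Ico_eq_Ico (by omega) (by omega)]
    refine hsub.le_add_of_isPairSet hf0 (hprefix m (by omega)) (hsuffix T hTt)
      (hunion ▸ hprefix t le_rfl) (fun i hi j hj => hinj.ne ?_ ?_ ?_)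
      fun i hi => (hposk i (by simp at hi; omega)).2 <;> simp at hi hj ⊢ <;> omega
  nlinarith [mul_le_mul_of_nonneg_left hhalf.le hFm]

/-- if the LAA run exceeds the budget, the maximal-cost feasible
suffix `x' = x_T` satisfies `f(x') ≥ f(x^t)/3`. -/
theorem stmt1 {V : Type*} [Fintype V] [DecidableEq V]
    (k : ℕ) (hk : 2 ≤ k)
    (f : (V → ℕ) → ℝ)
    (hsub : KSubmodular k f)
    (hnn : ∀ x : V → ℕ, IsKSet k x → 0 ≤ f x)
    (hf0 : f (fun _ => 0) = 0)
    (c : V → ℝ) (hc : ∀ e, 0 < c e) (B : ℝ) (hB : 0 < B)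
    (t : ℕ) (e : ℕ → V) (pos : ℕ → ℕ)
    (hdist : ∀ j₁ j₂, j₁ < t → j₂ < t → e j₁ = e j₂ → j₁ = j₂)
    (hposk : ∀ j < t, 1 ≤ pos j ∧ pos j ≤ k)
    (x : ℕ → (V → ℕ))
    (hx0 : x 0 = fun _ => 0)
    (hxsucc : ∀ j < t, x (j + 1) = sqcup (x j) (singl (e j) (pos j)))
    (hbest : ∀ j < t, ∀ l, 1 ≤ l → l ≤ k →
      f (sqcup (x j) (singl (e j) l)) ≤ f (sqcup (x j) (singl (e j) (pos j))))
    (hgain : ∀ j < t, c (e j) * f (x j) / B ≤ marg f (e j) (pos j) (x j))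
    (hlight : ∀ j < t, c (e j) ≤ B / 2)
    (hover : B < cost c (x t))
    (xs : ℕ → (V → ℕ))
    (hxs0 : xs 0 = fun _ => 0)
    (hxssucc : ∀ j < t, xs (j + 1) = sqcup (xs j) (singl (e (t - 1 - j)) (pos (t - 1 - j))))
    (T : ℕ) (hTt : T ≤ t) (hTB : cost c (xs T) ≤ B)
    (hTmax : ∀ j ≤ t, cost c (xs j) ≤ B → cost c (xs j) ≤ cost c (xs T))
    : f (x t) / 3 ≤ f (xs T) :=
  stmt1_general k f hsub hf0 c hc B hB t e pos hdist hposk x hx0 hxsucc hgain hlight hover xs hxs0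
    hxssucc T hTt hTB hTmax
end

section
/- Let f be a nonnegative k-submodular function with f(0) = 0, let (e_1,i_1),…,(e_t,i_t) be an LAA run, and let o be a k-set with c(o) ≤ B such that for every e ∈ supp(o) \ supp(x^t) and every i ∈ {1,…,k}, Δ_{(e,i)}f(x^t) ≤ c(e)·f(x^t)/B. Then f(o^t) ≤ 4·f(x^t). -/
/-! Orthant submodularity (diminishing returns) bounds `f(oᵗ) - f(xᵗ)` by the sum of the
marginal gains `Δ_{(e, o(e))} f(xᵗ)` over `e ∈ supp(o) \ supp(xᵗ)`. By saturation each gain is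
at most `c(e) f(xᵗ) / B`, and `c(o) ≤ B`, so in fact `f(oᵗ) ≤ 2 f(xᵗ)`. -/

section KSet

variable {V : Type*}

lemma isKSet_sqcup {k : ℕ} {x y : V → ℕ} (hx : IsKSet k x) (hy : IsKSet k y) :
    IsKSet k (sqcup x y) := by
  intro e
  unfold sqcup
  split_ifs
  exacts [hy e, hx e, hx e, Nat.zero_le k]

lemma isKSet_singl [DecidableEq V] {k : ℕ} (a : V) {i : ℕ} (hi : i ≤ k) :
    IsKSet k (singl a i) := by
  intro e
  unfold singl
  split_ifs <;> omega

lemma sqcup_sqcup_self_right_s2 (o y : V → ℕ) :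
    sqcup (sqcup o y) y = fun e => if y e = 0 then o e else y e := by
  funext e
  unfold sqcup
  split_ifs <;> simp_all

lemma sqcap_sqcup_singl_of_kle [DecidableEq V] {x y : V → ℕ} (hxy : KLE x y) {a : V}
    (hya : y a = 0) {i : ℕ} (hi : i ≠ 0) : sqcap (sqcup x (singl a i)) y = x := by
  funext e
  unfold sqcap sqcup singl KLE at *
  have := hxy e
  split_ifs <;> grind

lemma sqcup_sqcup_singl_of_kle [DecidableEq V] {x y : V → ℕ} (hxy : KLE x y) {a : V}
    (hya : y a = 0) (i : ℕ) : sqcup (sqcup x (singl a i)) y = sqcup y (singl a i) := by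
  funext e
  unfold sqcup singl KLE at *
  have := hxy e
  split_ifs <;> grind

/-- Orthant submodularity: marginal gains shrink along `⊑`. -/
lemma KSubmodular.marg_le_of_kle [DecidableEq V] {k : ℕ} {f : (V → ℕ) → ℝ}
    (hsub : KSubmodular k f) {x y : V → ℕ} (hx : IsKSet k x) (hy : IsKSet k y)
    (hxy : KLE x y) {a : V} (hya : y a = 0) {i : ℕ} (hi : i ≠ 0) (hik : i ≤ k) :
    marg f a i y ≤ marg f a i x := by
  have key := hsub _ y (isKSet_sqcup hx (isKSet_singl a hik)) hy
  rw [sqcap_sqcup_singl_of_kle hxy hya hi, sqcup_sqcup_singl_of_kle hxy hya] at key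
  unfold marg
  linarith

lemma KSubmodular.le_add_sum_marg [DecidableEq V] {k : ℕ} {f : (V → ℕ) → ℝ}
    (hsub : KSubmodular k f) {y o : V → ℕ} (hy : IsKSet k y) (ho : IsKSet k o)
    (T : Finset V) (hT : ∀ a ∈ T, o a ≠ 0 ∧ y a = 0) :
    f (fun e => if e ∈ T then o e else y e) ≤ f y + ∑ a ∈ T, marg f a (o a) y := by
  induction T using Finset.induction_on with
  | empty => simp
  | @insert a T ha ih =>
    obtain ⟨hoa, hya⟩ := hT a (Finset.mem_insert_self a T)
    have hT' : ∀ b ∈ T, o b ≠ 0 ∧ y b = 0 := fun b hb => hT b (Finset.mem_insert_of_mem hb)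
    set z : V → ℕ := fun e => if e ∈ T then o e else y e
    have hz : IsKSet k z := fun e => by dsimp only [z]; split_ifs; exacts [ho e, hy e]
    have hyz : KLE y z := fun b hb => by
      dsimp only [z]
      rw [if_neg fun hbT => hb (hT' b hbT).2]
    have hza : z a = 0 := by simp [z, ha, hya]
    have hstep : (fun e => if e ∈ insert a T then o e else y e) = sqcup z (singl a (o a)) := by
      funext e
      unfold sqcup singl
      by_cases hea : e = a
      · simp [hea, hza]
      · by_cases hz0 : z e = 0 <;> simp_all [z]
    have hmarg := hsub.marg_le_of_kle hy hz hyz hza hoa (ho a)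
    have hzT := ih hT'
    have hzstep : f (sqcup z (singl a (o a))) = f z + marg f a (o a) z := by rw [marg]; ring
    rw [hstep, Finset.sum_insert ha]
    linarith

lemma sum_le_cost [Fintype V] {c : V → ℝ} (hc : ∀ e, 0 ≤ c e) {o : V → ℕ} {T : Finset V}
    (hT : ∀ a ∈ T, o a ≠ 0) : ∑ a ∈ T, c a ≤ cost c o :=
  Finset.sum_le_sum_of_subset_of_nonneg (fun a ha => by simpa using hT a ha)
    (fun a _ _ => hc a)

lemma isKSet_iterate_sqcup_singl [DecidableEq V] {k t : ℕ} {e : ℕ → V}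
    {pos : ℕ → ℕ} (hposk : ∀ j < t, 1 ≤ pos j ∧ pos j ≤ k) {x : ℕ → (V → ℕ)}
    (hx0 : x 0 = fun _ => 0) (hxsucc : ∀ j < t, x (j + 1) = sqcup (x j) (singl (e j) (pos j))) :
    ∀ j ≤ t, IsKSet k (x j) := by
  intro j
  induction j with
  | zero => intro _ e; simp [hx0]
  | succ j ih =>
    intro hj
    rw [hxsucc j hj]
    exact isKSet_sqcup (ih (Nat.le_of_succ_le hj)) (isKSet_singl _ (hposk j hj).2)

end KSet

theorem stmt2_general {V : Type*} [Fintype V] [DecidableEq V]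
    (k : ℕ)
    (f : (V → ℕ) → ℝ)
    (hsub : KSubmodular k f)
    (hnn : ∀ x : V → ℕ, IsKSet k x → 0 ≤ f x)
    (c : V → ℝ) (hc : ∀ e, 0 < c e) (B : ℝ) (hB : 0 < B)
    (t : ℕ) (e : ℕ → V) (pos : ℕ → ℕ)
    (hposk : ∀ j < t, 1 ≤ pos j ∧ pos j ≤ k)
    (x : ℕ → (V → ℕ))
    (hx0 : x 0 = fun _ => 0)
    (hxsucc : ∀ j < t, x (j + 1) = sqcup (x j) (singl (e j) (pos j)))
    (o : V → ℕ) (ho : IsKSet k o) (hoB : cost c o ≤ B)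
    (hsat : ∀ e', o e' ≠ 0 → x t e' = 0 → ∀ i, 1 ≤ i → i ≤ k →
      marg f e' i (x t) ≤ c e' * f (x t) / B) :
    f (sqcup (sqcup o (x t)) (x t)) ≤ 4 * f (x t) := by
  have hxt : IsKSet k (x t) := isKSet_iterate_sqcup_singl hposk hx0 hxsucc t le_rfl
  have hfxt : 0 ≤ f (x t) := hnn _ hxt
  set S := Finset.univ.filter fun a => o a ≠ 0 ∧ x t a = 0
  have hS : ∀ a ∈ S, o a ≠ 0 ∧ x t a = 0 := fun a ha => (Finset.mem_filter.mp ha).2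
  have hoS : sqcup (sqcup o (x t)) (x t) = fun a => if a ∈ S then o a else x t a := by
    rw [sqcup_sqcup_self_right_s2]
    funext a
    by_cases hxa : x t a = 0 <;> by_cases hoa : o a = 0 <;> simp [S, hxa, hoa]
  have hcS : ∑ a ∈ S, c a ≤ B :=
    (sum_le_cost (fun a => (hc a).le) fun a ha => (hS a ha).1).trans hoB
  calc f (sqcup (sqcup o (x t)) (x t))
      ≤ f (x t) + ∑ a ∈ S, marg f a (o a) (x t) := hoS ▸ hsub.le_add_sum_marg hxt ho S hS
    _ ≤ f (x t) + ∑ a ∈ S, c a * f (x t) / B := by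
        gcongr with a ha
        exact hsat a (hS a ha).1 (hS a ha).2 _ (Nat.one_le_iff_ne_zero.mpr (hS a ha).1) (ho a)
    _ = f (x t) + (∑ a ∈ S, c a) / B * f (x t) := by
        rw [Finset.sum_div, Finset.sum_mul]
        congr 1
        exact Finset.sum_congr rfl fun a _ => by ring
    _ ≤ f (x t) + 1 * f (x t) := by
        gcongr
        exact (div_le_one hB).mpr hcS
    _ ≤ 4 * f (x t) := by linarith

/-- if no remaining element of `o` passes the density test at the
end of the LAA run, then `f(o^t) ≤ 4 f(x^t)`. -/
theorem stmt2 {V : Type*} [Fintype V] [DecidableEq V]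
    (k : ℕ) (hk : 2 ≤ k)
    (f : (V → ℕ) → ℝ)
    (hsub : KSubmodular k f)
    (hnn : ∀ x : V → ℕ, IsKSet k x → 0 ≤ f x)
    (hf0 : f (fun _ => 0) = 0)
    (c : V → ℝ) (hc : ∀ e, 0 < c e) (B : ℝ) (hB : 0 < B)
    (t : ℕ) (e : ℕ → V) (pos : ℕ → ℕ)
    (hdist : ∀ j₁ j₂, j₁ < t → j₂ < t → e j₁ = e j₂ → j₁ = j₂)
    (hposk : ∀ j < t, 1 ≤ pos j ∧ pos j ≤ k)
    (x : ℕ → (V → ℕ))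
    (hx0 : x 0 = fun _ => 0)
    (hxsucc : ∀ j < t, x (j + 1) = sqcup (x j) (singl (e j) (pos j)))
    (hbest : ∀ j < t, ∀ l, 1 ≤ l → l ≤ k →
      f (sqcup (x j) (singl (e j) l)) ≤ f (sqcup (x j) (singl (e j) (pos j))))
    (hgain : ∀ j < t, c (e j) * f (x j) / B ≤ marg f (e j) (pos j) (x j))
    (hlight : ∀ j < t, c (e j) ≤ B / 2)
    (o : V → ℕ) (ho : IsKSet k o) (hoB : cost c o ≤ B)
    (hsat : ∀ e', o e' ≠ 0 → x t e' = 0 → ∀ i, 1 ≤ i → i ≤ k →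
      marg f e' i (x t) ≤ c e' * f (x t) / B) :
    f (sqcup (sqcup o (x t)) (x t)) ≤ 4 * f (x t) :=
  stmt2_general k f hsub hnn c hc B hB t e pos hposk x hx0 hxsucc o ho hoB hsat
end
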